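/- Let K be the 3×3 real matrix K = [[0, 2, 0], [−2, 0, 2], [0, −2, 0]]. Then for every real number c, the matrix exponential satisfies exp(c·K) · (0, 0, 1)ᵀ = (sin²(√2·c), √2·sin(√2·c)·cos(√2·c), cos²(√2·c))ᵀ. (This is the continuous-time description of the parallel Grover dynamics for k = 2 on the main-path states (e₁e₂, e₁N₂, N₁N₂): starting from the source state N₁N₂, the amplitude of the sink state e₁e₂ evolves as sin²(√2 c).) -/

import Mathlib

open Matrix Real

/-- The generator of the continuous-time parallel Grover dynamics for `k = 2`
on the main-path states `(e₁e₂, e₁N₂, N₁N₂)`. -/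
noncomputable def Kgen : Matrix (Fin 3) (Fin 3) ℝ :=
  !![0, 2, 0; -2, 0, 2; 0, -2, 0]

/-!
Since `K³ = -ω² K` with `ω = 2√2`, Rodrigues' formula
`exp (t K) = 1 + (sin (ω t) / ω) K + ((1 - cos (ω t)) / ω²) K²` holds: its right-hand side `E`
satisfies `E' = K E`, `E 0 = 1`, and any such `E` equals `t ↦ exp (t K)` because
`u ↦ exp ((t - u) K) E u` has zero derivative. Applying the formula to `(0, 0, 1)` and using the
double-angle formulas at `θ = √2 c` gives the claim.
-/

section BanachAlgebra

variable {𝔸 : Type*} [NormedRing 𝔸] [NormedAlgebra ℝ 𝔸] [CompleteSpace 𝔸]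

theorem eq_exp_smul_of_hasDerivAt {A : 𝔸} {E : ℝ → 𝔸} (hE : ∀ t, HasDerivAt E (A * E t) t)
    (hE₀ : E 0 = 1) (t : ℝ) : E t = NormedSpace.exp (t • A) := by
  set G : ℝ → 𝔸 := fun u => NormedSpace.exp ((t - u) • A) * E u
  have hG : ∀ u, HasDerivAt G 0 u := by
    intro u
    have hexp : HasDerivAt (fun u : ℝ => NormedSpace.exp ((t - u) • A))
        (-(A * NormedSpace.exp ((t - u) • A))) u := by
      simpa [Function.comp_def] using
        (hasDerivAt_exp_smul_const' A (t - u)).scomp u ((hasDerivAt_id u).const_sub t)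
    have hcomm : Commute (NormedSpace.exp ((t - u) • A)) A :=
      ((Commute.refl A).smul_left (t - u)).exp_left
    refine (hexp.mul (hE u)).congr_deriv ?_
    rw [neg_mul, ← mul_assoc, ← hcomm.eq, mul_assoc, neg_add_cancel]
  have hG_const : G t = G 0 :=
    is_const_of_deriv_eq_zero (fun u => (hG u).differentiableAt) (fun u => (hG u).deriv) t 0
  simpa [G, hE₀] using hG_const

theorem exp_smul_eq_of_pow_three_eq {A : 𝔸} {ω : ℝ} (hω : ω ≠ 0) (hA : A ^ 3 = -ω ^ 2 • A)
    (t : ℝ) :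
    NormedSpace.exp (t • A) =
      1 + (sin (ω * t) / ω) • A + ((1 - cos (ω * t)) / ω ^ 2) • A ^ 2 := by
  set E : ℝ → 𝔸 := fun t => 1 + (sin (ω * t) / ω) • A + ((1 - cos (ω * t)) / ω ^ 2) • A ^ 2
  have hE : ∀ t, HasDerivAt E (A * E t) t := by
    intro t
    have hω' : HasDerivAt (fun t => ω * t) ω t := by simpa using (hasDerivAt_id t).const_mul ω
    have hsin : HasDerivAt (fun t => sin (ω * t) / ω) (cos (ω * t)) t :=
      (hω'.sin.div_const ω).congr_deriv (by field_simp)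
    have hcos : HasDerivAt (fun t => (1 - cos (ω * t)) / ω ^ 2) (sin (ω * t) / ω) t :=
      ((hω'.cos.const_sub 1).div_const (ω ^ 2)).congr_deriv (by field_simp)
    refine (((hsin.smul_const A).const_add 1).add (hcos.smul_const (A ^ 2))).congr_deriv ?_
    simp only [E, mul_add, mul_one, mul_smul_comm, ← sq, ← pow_succ', hA, smul_smul]
    match_scalars
    · field_simp
      ring
    · ring
  exact (eq_exp_smul_of_hasDerivAt hE (by simp [E]) t).symm

end BanachAlgebra

theorem Kgen_pow_three : Kgen ^ 3 = -(8 : ℝ) • Kgen := by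
  ext i j
  fin_cases i <;> fin_cases j <;> norm_num [Kgen, pow_succ, mul_apply, Fin.sum_univ_succ]

theorem Kgen_mulVec_source : Kgen *ᵥ ![0, 0, 1] = ![0, 2, 0] := by
  ext i
  fin_cases i <;> simp [Kgen, mulVec, dotProduct, Fin.sum_univ_succ]

theorem Kgen_sq_mulVec_source : Kgen ^ 2 *ᵥ ![0, 0, 1] = ![4, 0, -4] := by
  rw [sq, ← mulVec_mulVec, Kgen_mulVec_source]
  ext i
  fin_cases i <;> norm_num [Kgen, mulVec, dotProduct, Fin.sum_univ_succ]

theorem exp_K_mulVec (c : ℝ) :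
    (NormedSpace.exp (c • Kgen)).mulVec ![0, 0, 1] =
      ![Real.sin (Real.sqrt 2 * c) ^ 2,
        Real.sqrt 2 * Real.sin (Real.sqrt 2 * c) * Real.cos (Real.sqrt 2 * c),
        Real.cos (Real.sqrt 2 * c) ^ 2] := by
  have hω : (2 * √2) ^ 2 = 8 := by rw [mul_pow, sq_sqrt zero_le_two]; norm_num
  have hexp : NormedSpace.exp (c • Kgen) = _ := open scoped Matrix.Norms.Operator in
    exp_smul_eq_of_pow_three_eq (ω := 2 * √2) (by positivity) (by rw [hω, Kgen_pow_three]) c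
  rw [hexp, add_mulVec, add_mulVec, smul_mulVec, smul_mulVec, one_mulVec, Kgen_mulVec_source,
    Kgen_sq_mulVec_source, hω, mul_assoc, sin_two_mul, cos_two_mul]
  ext i
  fin_cases i <;>
    simp only [smul_cons, smul_eq_mul, mul_zero, mul_neg, smul_empty, add_cons, empty_add_empty,
      head_cons, tail_cons, add_zero, zero_add, Fin.zero_eta, Fin.mk_one, Fin.reduceFinMk, cons_val] <;>
    field_simp
  · linear_combination (-8) * sin_sq_add_cos_sq (√2 * c)
  · rw [sq_sqrt zero_le_two]
  · ring
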